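/- arXiv:1303.5016 — 11 statements merged into one kernel-verified Lean document; each statement's English description precedes it below -/
import Mathlib

section
/- Let P be a probability measure on a measurable space and let A, H, B, K be measurable events with P(H) > 0 and P(K) > 0 (so P(H ∪ K) > 0). Set x = P(A|H), y = P(B|K), and z = P(((A∩H) ∪ Hᶜ) ∩ ((B∩K) ∪ Kᶜ) | H ∪ K). Then max(x + y − 1, 0) ≤ z ≤ S₀ᴴ(x,y), where S₀ᴴ(x,y) = (x + y − 2xy)/(1 − xy) if (x,y) ≠ (1,1) and S₀ᴴ(1,1) = 1. -/
open MeasureTheory Set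

/-- Conditional probability `P(E|H) = P(E ∩ H)/P(H)` as a real number. -/
noncomputable def condP {Ω : Type*} [MeasurableSpace Ω] (μ : Measure Ω) (E H : Set Ω) : ℝ :=
  (μ (E ∩ H)).toReal / (μ H).toReal

theorem quasi_conjunction_bounds {Ω : Type*} [MeasurableSpace Ω]
    (μ : Measure Ω) [IsProbabilityMeasure μ] (A H B K : Set Ω)
    (hA : MeasurableSet A) (hH : MeasurableSet H) (hB : MeasurableSet B) (hK : MeasurableSet K)
    (hHpos : 0 < μ H) (hKpos : 0 < μ K)
    (x y z : ℝ) (hx : x = condP μ A H) (hy : y = condP μ B K)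
    (hz : z = condP μ (((A ∩ H) ∪ Hᶜ) ∩ ((B ∩ K) ∪ Kᶜ)) (H ∪ K)) :
    max (x + y - 1) 0 ≤ z ∧
      z ≤ (if (x, y) = ((1 : ℝ), (1 : ℝ)) then 1 else (x + y - 2 * x * y) / (1 - x * y)) := by
  simp only [condP] at hx hy hz
  set C : Set Ω := ((A ∩ H) ∪ Hᶜ) ∩ ((B ∩ K) ∪ Kᶜ) with hCdef
  set D : Set Ω := (Aᶜ ∩ H) ∪ (Bᶜ ∩ K) with hDdef
  have hCm : MeasurableSet C := ((hA.inter hH).union hH.compl).inter ((hB.inter hK).union hK.compl)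
  -- real variables
  set h := (μ H).toReal with hh
  set k := (μ K).toReal with hk
  set m := (μ (H ∩ K)).toReal with hm
  set u := (μ (H ∪ K)).toReal with hu
  set s := (μ (A ∩ H)).toReal with hs
  set t := (μ (B ∩ K)).toReal with ht
  set p := (μ (Aᶜ ∩ H)).toReal with hp
  set q := (μ (Bᶜ ∩ K)).toReal with hq
  set w := (μ (C ∩ (H ∪ K))).toReal with hw
  set dd := (μ D).toReal with hdd
  have fin : ∀ S : Set Ω, μ S ≠ ⊤ := fun S => measure_ne_top μ S
  have toR : ∀ {S T U V : Set Ω}, μ S + μ T = μ U + μ V →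
      (μ S).toReal + (μ T).toReal = (μ U).toReal + (μ V).toReal := by
    intro S T U V hSTUV
    have := congrArg ENNReal.toReal hSTUV
    rwa [ENNReal.toReal_add (fin S) (fin T), ENNReal.toReal_add (fin U) (fin V)] at this
  have toRle : ∀ {S T : Set Ω}, S ⊆ T → (μ S).toReal ≤ (μ T).toReal := by
    intro S T hST
    exact ENNReal.toReal_mono (fin T) (measure_mono hST)
  -- nonnegativity and positivity
  have hh0 : 0 < h := ENNReal.toReal_pos hHpos.ne' (fin H)
  have hk0 : 0 < k := ENNReal.toReal_pos hKpos.ne' (fin K)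
  have hhu : h ≤ u := toRle subset_union_left
  have hku : k ≤ u := toRle subset_union_right
  have hu0 : 0 < u := lt_of_lt_of_le hh0 hhu
  have hs0 : 0 ≤ s := ENNReal.toReal_nonneg
  have ht0 : 0 ≤ t := ENNReal.toReal_nonneg
  have hp0 : 0 ≤ p := ENNReal.toReal_nonneg
  have hq0 : 0 ≤ q := ENNReal.toReal_nonneg
  have hw0 : 0 ≤ w := ENNReal.toReal_nonneg
  have hdd0 : 0 ≤ dd := ENNReal.toReal_nonneg
  have hm0 : 0 ≤ m := ENNReal.toReal_nonneg
  -- key measure identities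
  have hum : u + m = h + k := toR (measure_union_add_inter (μ := μ) H hK)
  have hsp : s + p = h := by
    have e : μ (A ∩ H) + μ (Aᶜ ∩ H) = μ H + μ ∅ := by
      rw [measure_empty, add_zero, inter_comm A H, inter_comm Aᶜ H, ← diff_eq,
        measure_inter_add_diff H hA]
    have e2 := toR e
    simp only [measure_empty, ENNReal.toReal_zero, add_zero] at e2
    exact e2
  have htq : t + q = k := by
    have e : μ (B ∩ K) + μ (Bᶜ ∩ K) = μ K + μ ∅ := by
      rw [measure_empty, add_zero, inter_comm B K, inter_comm Bᶜ K, ← diff_eq,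
        measure_inter_add_diff K hB]
    have e2 := toR e
    simp only [measure_empty, ENNReal.toReal_zero, add_zero] at e2
    exact e2
  have hDC : (H ∪ K) \ C = D := by
    rw [hCdef, hDdef]
    ext ω
    simp only [mem_diff, mem_union, mem_inter_iff, mem_compl_iff]
    tauto
  have hwdd : w + dd = u := by
    have e : μ (C ∩ (H ∪ K)) + μ D = μ (H ∪ K) + μ ∅ := by
      rw [measure_empty, add_zero, inter_comm C (H ∪ K), ← hDC,
        measure_inter_add_diff (H ∪ K) hCm]
    have e2 := toR e
    simp only [measure_empty, ENNReal.toReal_zero, add_zero] at e2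
    exact e2
  have hpdd : p ≤ dd := toRle subset_union_left
  have hqdd : q ≤ dd := toRle subset_union_right
  have hi0 : (0:ℝ) ≤ (μ ((Aᶜ ∩ H) ∩ (Bᶜ ∩ K))).toReal := ENNReal.toReal_nonneg
  have him : (μ ((Aᶜ ∩ H) ∩ (Bᶜ ∩ K))).toReal ≤ m := by
    apply toRle
    intro ω hω
    exact ⟨hω.1.2, hω.2.2⟩
  have hie : dd + (μ ((Aᶜ ∩ H) ∩ (Bᶜ ∩ K))).toReal = p + q := by
    have e : μ D + μ ((Aᶜ ∩ H) ∩ (Bᶜ ∩ K)) = μ (Aᶜ ∩ H) + μ (Bᶜ ∩ K) :=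
      measure_union_add_inter (μ := μ) _ (hB.compl.inter hK)
    exact toR e
  have hpq : p + q ≤ dd + m := by linarith
  have hdpq : dd ≤ p + q := by linarith
  -- make everything opaque from now on
  clear_value h k m u s t p q w dd
  clear toR toRle fin hDC hCm hCdef hDdef hie him hi0
  -- abbreviations a, b, r
  set a := p / h with ha
  set b := q / k with hb
  have hah : a * h = p := div_mul_cancel₀ p hh0.ne'
  have hbk : b * k = q := div_mul_cancel₀ q hk0.ne'
  have ha0 : 0 ≤ a := div_nonneg hp0 hh0.le
  have hb0 : 0 ≤ b := div_nonneg hq0 hk0.le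
  have hph : p ≤ h := by linarith
  have hqk : q ≤ k := by linarith
  have ha1 : a ≤ 1 := by rw [ha, div_le_one hh0]; exact hph
  have hb1 : b ≤ 1 := by rw [hb, div_le_one hk0]; exact hqk
  have hxa : x = 1 - a := by
    rw [hx, ha]
    field_simp
    linarith
  have hyb : y = 1 - b := by
    rw [hy, hb]
    field_simp
    linarith
  set r := dd / u with hr
  have hr0 : 0 ≤ r := div_nonneg hdd0 hu0.le
  have hzr : z = 1 - r := by
    rw [hz, hr]
    field_simp
    linarith
  clear_value a b r
  constructor
  · -- lower bound
    apply max_le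
    · -- x + y - 1 ≤ z
      have h1 : r ≤ (p + q) / u := by
        rw [hr]
        gcongr
      have h2 : p / u ≤ p / h := by gcongr
      have h3 : q / u ≤ q / k := by gcongr
      have h4 : (p + q) / u = p / u + q / u := add_div p q u
      rw [hxa, hyb, hzr, ha, hb]
      linarith
    · rw [hz]
      positivity
  · -- upper bound
    by_cases hcase : (x, y) = ((1 : ℝ), (1 : ℝ))
    · rw [if_pos hcase, hzr]
      linarith
    · rw [if_neg hcase]
      have hab : 0 < a + b - a * b := by
        have hne : a ≠ 0 ∨ b ≠ 0 := by
          by_contra hcon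
          push_neg at hcon
          apply hcase
          rw [hxa, hyb, hcon.1, hcon.2]
          norm_num
        rcases hne with hne | hne
        · have h5 : 0 < a := lt_of_le_of_ne ha0 (Ne.symm hne)
          have h6 : 0 ≤ b * (1 - a) := mul_nonneg hb0 (by linarith)
          have h7 : a + b - a * b = a + b * (1 - a) := by ring
          linarith
        · have h5 : 0 < b := lt_of_le_of_ne hb0 (Ne.symm hne)
          have h6 : 0 ≤ a * (1 - b) := mul_nonneg ha0 (by linarith)
          have h7 : a + b - a * b = b + a * (1 - b) := by ring
          linarith
      -- key inequality
      have hkey : a * b * u ≤ dd * (a + b - a * b) := by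
        have hu' : u = h + k - m := by linarith
        rw [hu']
        have t1 : 0 ≤ b * (1 - a) * (dd - a * h) := by
          apply mul_nonneg (mul_nonneg hb0 (by linarith)) (by rw [hah]; linarith)
        have t2 : 0 ≤ a * (1 - b) * (dd - b * k) := by
          apply mul_nonneg (mul_nonneg ha0 (by linarith)) (by rw [hbk]; linarith)
        have t3 : 0 ≤ a * b * (dd - (a * h + b * k - m)) := by
          apply mul_nonneg (mul_nonneg ha0 hb0)
          rw [hah, hbk]; linarith
        have hid : dd * (a + b - a * b) - a * b * (h + k - m) =
            b * (1 - a) * (dd - a * h) + a * (1 - b) * (dd - b * k) +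
              a * b * (dd - (a * h + b * k - m)) := by ring
        linarith [t1, t2, t3, hid]
      have habr : a * b ≤ r * (a + b - a * b) := by
        rw [hr, div_mul_eq_mul_div, le_div_iff₀ hu0]
        linarith [hkey]
      have hxy : 1 - x * y = a + b - a * b := by rw [hxa, hyb]; ring
      rw [le_div_iff₀ (by rw [hxy]; exact hab)]
      rw [hxa, hyb, hzr]
      have hid2 : ((1 - a) + (1 - b) - 2 * (1 - a) * (1 - b)) -
          (1 - r) * (1 - (1 - a) * (1 - b)) = r * (a + b - a * b) - a * b := by ring
      linarith [habr, hid2]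
end

section
/- Let A, H, B, K be subsets of a set Ω with A∩H ⊆ B∩K and Bᶜ∩K ⊆ Aᶜ∩H (Goodman–Nguyen inclusion A|H ⊆ B|K). Write Q = ((A∩H) ∪ Hᶜ) ∩ ((B∩K) ∪ Kᶜ) and L = H ∪ K for the consequent and conditioning event of the quasi conjunction C(A|H,B|K). Then A|H ⊆ C(A|H,B|K) ⊆ B|K in the Goodman–Nguyen sense; explicitly: A∩H ⊆ Q∩L, Qᶜ∩L ⊆ Aᶜ∩H, Q∩L ⊆ B∩K, and Bᶜ∩K ⊆ Qᶜ∩L. -/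
open Set

theorem quasi_conjunction_goodman_nguyen {Ω : Type*} (A H B K : Set Ω)
    (h1 : A ∩ H ⊆ B ∩ K) (h2 : Bᶜ ∩ K ⊆ Aᶜ ∩ H) :
    A ∩ H ⊆ (((A ∩ H) ∪ Hᶜ) ∩ ((B ∩ K) ∪ Kᶜ)) ∩ (H ∪ K) ∧
    (((A ∩ H) ∪ Hᶜ) ∩ ((B ∩ K) ∪ Kᶜ))ᶜ ∩ (H ∪ K) ⊆ Aᶜ ∩ H ∧
    (((A ∩ H) ∪ Hᶜ) ∩ ((B ∩ K) ∪ Kᶜ)) ∩ (H ∪ K) ⊆ B ∩ K ∧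
    Bᶜ ∩ K ⊆ (((A ∩ H) ∪ Hᶜ) ∩ ((B ∩ K) ∪ Kᶜ))ᶜ ∩ (H ∪ K) := by
  refine ⟨fun x hx => ?_, fun x hx => ?_, fun x hx => ?_, fun x hx => ?_⟩ <;>
  · have t1 := @h1 x
    have t2 := @h2 x
    simp only [mem_inter_iff, mem_union, mem_compl_iff] at *
    tauto
end

section
/- Let A, H, B, K be measurable events such that either (A∩H ⊆ B∩K and Bᶜ∩K ⊆ Aᶜ∩H), or A∩H = ∅, or Bᶜ∩K = ∅. Then for every probability measure P with P(H) > 0 and P(K) > 0, one has P(A|H) ≤ P(B|K). -/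
open MeasureTheory Set

theorem goodman_nguyen_monotone {Ω : Type*} [MeasurableSpace Ω] (A H B K : Set Ω)
    (hA : MeasurableSet A) (hH : MeasurableSet H) (hB : MeasurableSet B) (hK : MeasurableSet K)
    (hGN : (A ∩ H ⊆ B ∩ K ∧ Bᶜ ∩ K ⊆ Aᶜ ∩ H) ∨ A ∩ H = ∅ ∨ Bᶜ ∩ K = ∅) :
    ∀ (μ : Measure Ω), IsProbabilityMeasure μ → 0 < μ H → 0 < μ K →
      condP μ A H ≤ condP μ B K := by
  intro μ hμ hHpos hKpos
  have hHfin : μ H ≠ ⊤ := measure_ne_top μ H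
  have hKfin : μ K ≠ ⊤ := measure_ne_top μ K
  have hh : 0 < (μ H).toReal := ENNReal.toReal_pos hHpos.ne' hHfin
  have hk : 0 < (μ K).toReal := ENNReal.toReal_pos hKpos.ne' hKfin
  rcases hGN with ⟨h1, h2⟩ | hAH | hBK
  · -- main case
    have ha_le_b : (μ (A ∩ H)).toReal ≤ (μ (B ∩ K)).toReal :=
      ENNReal.toReal_mono (measure_ne_top μ _) (measure_mono h1)
    have ha_le_h : (μ (A ∩ H)).toReal ≤ (μ H).toReal :=
      ENNReal.toReal_mono hHfin (measure_mono inter_subset_right)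
    -- μ(Bᶜ∩K) ≤ μ(Aᶜ∩H)
    have hc : (μ (Bᶜ ∩ K)).toReal ≤ (μ (Aᶜ ∩ H)).toReal :=
      ENNReal.toReal_mono (measure_ne_top μ _) (measure_mono h2)
    -- splitting
    have hKsplit : (μ (B ∩ K)).toReal + (μ (Bᶜ ∩ K)).toReal = (μ K).toReal := by
      rw [← ENNReal.toReal_add (measure_ne_top μ _) (measure_ne_top μ _)]
      congr 1
      have : B ∩ K = K ∩ B := inter_comm _ _
      rw [this, inter_comm Bᶜ K, ← Set.diff_eq, measure_inter_add_diff K hB]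
    have hHsplit : (μ (A ∩ H)).toReal + (μ (Aᶜ ∩ H)).toReal = (μ H).toReal := by
      rw [← ENNReal.toReal_add (measure_ne_top μ _) (measure_ne_top μ _)]
      congr 1
      rw [inter_comm A H, inter_comm Aᶜ H, ← Set.diff_eq, measure_inter_add_diff H hA]
    unfold condP
    rw [div_le_div_iff₀ hh hk]
    nlinarith [ENNReal.toReal_nonneg (a := μ (A ∩ H)),
      ENNReal.toReal_nonneg (a := μ (B ∩ K)),
      mul_nonneg (sub_nonneg.2 ha_le_b) (sub_nonneg.2 ha_le_h)]
  · -- A ∩ H = ∅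
    unfold condP
    rw [hAH, measure_empty]
    simp
    positivity
  · -- Bᶜ ∩ K = ∅
    have hKB : K ⊆ B := by
      intro x hx
      by_contra hxB
      exact (hBK ▸ (mem_inter hxB hx) : x ∈ (∅ : Set Ω))
    have : B ∩ K = K := inter_eq_self_of_subset_right hKB
    unfold condP
    rw [this, div_self hk.ne']
    have : (μ (A ∩ H)).toReal ≤ (μ H).toReal :=
      ENNReal.toReal_mono hHfin (measure_mono inter_subset_right)
    exact div_le_one_of_le₀ this (le_of_lt hh)
end

section
/- Let P be a probability measure and A, H, B, K measurable events with P(H) > 0, P(K) > 0, A∩H ⊆ B∩K and Bᶜ∩K ⊆ Aᶜ∩H. Then P(A|H) ≤ P(((A∩H) ∪ Hᶜ) ∩ ((B∩K) ∪ Kᶜ) | H ∪ K) ≤ P(B|K), i.e. the probability of the quasi conjunction lies between min(x,y) and max(x,y) where x = P(A|H) ≤ y = P(B|K). Moreover, for every pair of reals 0 ≤ x ≤ y ≤ 1 there exist a probability space and measurable events A, H, B, K with A∩H ⊆ B∩K, Bᶜ∩K ⊆ Aᶜ∩H, P(H) > 0, P(K) > 0, P(A|H) = x, P(B|K) = y,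 and P(((A∩H) ∪ Hᶜ) ∩ ((B∩K) ∪ Kᶜ) | H ∪ K) = x (the lower bound min(x,y) is attained). -/
open MeasureTheory Set

theorem quasi_conjunction_goodman_nguyen_bounds :
    (∀ (Ω : Type) (_ : MeasurableSpace Ω) (μ : Measure Ω), IsProbabilityMeasure μ →
      ∀ A H B K : Set Ω,
        MeasurableSet A → MeasurableSet H → MeasurableSet B → MeasurableSet K →
        0 < μ H → 0 < μ K → A ∩ H ⊆ B ∩ K → Bᶜ ∩ K ⊆ Aᶜ ∩ H →
        condP μ A H ≤ condP μ (((A ∩ H) ∪ Hᶜ) ∩ ((B ∩ K) ∪ Kᶜ)) (H ∪ K) ∧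
        condP μ (((A ∩ H) ∪ Hᶜ) ∩ ((B ∩ K) ∪ Kᶜ)) (H ∪ K) ≤ condP μ B K) ∧
    (∀ x y : ℝ, 0 ≤ x → x ≤ y → y ≤ 1 →
      ∃ (Ω : Type) (_ : MeasurableSpace Ω) (μ : Measure Ω) (_ : IsProbabilityMeasure μ)
        (A H B K : Set Ω),
        MeasurableSet A ∧ MeasurableSet H ∧ MeasurableSet B ∧ MeasurableSet K ∧
        A ∩ H ⊆ B ∩ K ∧ Bᶜ ∩ K ⊆ Aᶜ ∩ H ∧ 0 < μ H ∧ 0 < μ K ∧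
        condP μ A H = x ∧ condP μ B K = y ∧
        condP μ (((A ∩ H) ∪ Hᶜ) ∩ ((B ∩ K) ∪ Kᶜ)) (H ∪ K) = x) := by
  constructor
  · intro Ω mΩ μ hμ A H B K mA mH mB mK hH hK h1 h2
    -- set identities from the Goodman–Nguyen inclusion
    have e1 : ((A ∩ H) ∪ Hᶜ) ∩ ((B ∩ K) ∪ Kᶜ) ∩ (H ∪ K) = (A ∩ H) ∪ (B ∩ K ∩ Hᶜ) := by
      ext z
      have t1 := @h1 z
      have t2 := @h2 z
      simp only [mem_inter_iff, mem_union, mem_compl_iff] at *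
      tauto
    have e2 : H ∪ K = H ∪ (B ∩ K ∩ Hᶜ) := by
      ext z
      have t2 := @h2 z
      simp only [mem_inter_iff, mem_union, mem_compl_iff] at *
      tauto
    have e3 : B ∩ K = (B ∩ K ∩ H) ∪ (B ∩ K ∩ Hᶜ) := by
      ext z
      simp only [mem_inter_iff, mem_union, mem_compl_iff]
      tauto
    have e4 : K = (K ∩ H) ∪ (B ∩ K ∩ Hᶜ) := by
      ext z
      have t2 := @h2 z
      simp only [mem_inter_iff, mem_union, mem_compl_iff] at *
      tauto
    have mBKH : MeasurableSet (B ∩ K ∩ Hᶜ) := ((mB.inter mK).inter mH.compl)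
    have dj1 : Disjoint H (B ∩ K ∩ Hᶜ) := by
      rw [Set.disjoint_left]
      rintro z hz ⟨-, hz'⟩
      exact hz' hz
    have dj2 : Disjoint (A ∩ H) (B ∩ K ∩ Hᶜ) := by
      rw [Set.disjoint_left]
      rintro z ⟨-, hz⟩ ⟨-, hz'⟩
      exact hz' hz
    have dj3 : Disjoint (B ∩ K ∩ H) (B ∩ K ∩ Hᶜ) := by
      rw [Set.disjoint_left]
      rintro z ⟨-, hz⟩ ⟨-, hz'⟩
      exact hz' hz
    have dj4 : Disjoint (K ∩ H) (B ∩ K ∩ Hᶜ) := by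
      rw [Set.disjoint_left]
      rintro z ⟨-, hz⟩ ⟨-, hz'⟩
      exact hz' hz
    set a := (μ (A ∩ H)).toReal with ha
    set m := (μ (B ∩ K ∩ Hᶜ)).toReal with hm
    set h := (μ H).toReal with hh
    set k' := (μ (K ∩ H)).toReal with hk'
    set b' := (μ (B ∩ K ∩ H)).toReal with hb'
    have fin : ∀ s : Set Ω, μ s ≠ ⊤ := fun s => measure_ne_top μ s
    have hQC : (μ (((A ∩ H) ∪ Hᶜ) ∩ ((B ∩ K) ∪ Kᶜ) ∩ (H ∪ K))).toReal = a + m := by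
      rw [e1, measure_union dj2 mBKH, ENNReal.toReal_add (fin _) (fin _)]
    have hHK : (μ (H ∪ K)).toReal = h + m := by
      rw [e2, measure_union dj1 mBKH, ENNReal.toReal_add (fin _) (fin _)]
    have hBK : (μ (B ∩ K)).toReal = b' + m := by
      rw [e3, measure_union dj3 mBKH, ENNReal.toReal_add (fin _) (fin _)]
    have hKeq : (μ K).toReal = k' + m := by
      rw [e4, measure_union dj4 mBKH, ENNReal.toReal_add (fin _) (fin _)]
    have hpos : 0 < h := ENNReal.toReal_pos hH.ne' (fin _)
    have hKpos : 0 < k' + m := by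
      rw [← hKeq]; exact ENNReal.toReal_pos hK.ne' (fin _)
    have hmnn : 0 ≤ m := ENNReal.toReal_nonneg
    have hann : 0 ≤ a := ENNReal.toReal_nonneg
    have hb'nn : 0 ≤ b' := ENNReal.toReal_nonneg
    have hk'nn : 0 ≤ k' := ENNReal.toReal_nonneg
    have hah : a ≤ h := ENNReal.toReal_mono (fin _) (measure_mono inter_subset_right)
    have hab' : a ≤ b' := by
      apply ENNReal.toReal_mono (fin _)
      apply measure_mono
      exact fun z hz => ⟨h1 hz, hz.2⟩
    have hk'h : k' ≤ h := ENNReal.toReal_mono (fin _) (measure_mono inter_subset_right)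
    have hHKpos : 0 < h + m := by linarith
    unfold condP
    rw [hQC, hHK, hBK, hKeq]
    constructor
    · rw [div_le_div_iff₀ hpos hHKpos]
      nlinarith
    · rw [div_le_div_iff₀ hHKpos hKpos]
      nlinarith [mul_nonneg (sub_nonneg.mpr hab') (by linarith : (0:ℝ) ≤ k' + m),
        mul_nonneg (by linarith : (0:ℝ) ≤ b' + m) (sub_nonneg.mpr hk'h)]
  · intro x y hx hxy hy1
    set μ : Measure (Fin 3) := ENNReal.ofReal x • Measure.dirac 0 +
      ENNReal.ofReal (y - x) • Measure.dirac 1 + ENNReal.ofReal (1 - y) • Measure.dirac 2 with hμ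
    have happ : ∀ s : Set (Fin 3), μ s = ENNReal.ofReal x * s.indicator 1 0 +
        ENNReal.ofReal (y - x) * s.indicator 1 1 + ENNReal.ofReal (1 - y) * s.indicator 1 2 := by
      intro s
      simp [hμ, Measure.dirac_apply' _ (show MeasurableSet s from trivial)]
    have hprob : IsProbabilityMeasure μ := by
      constructor
      rw [happ]
      simp only [indicator_of_mem (mem_univ _), Pi.one_apply, mul_one]
      rw [← ENNReal.ofReal_add hx (by linarith), ← ENNReal.ofReal_add (by linarith) (by linarith)]
      norm_num
    haveI := hprob
    have h0 : μ {0} = ENNReal.ofReal x := by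
      rw [happ]
      rw [show ({0} : Set (Fin 3)).indicator (1 : Fin 3 → ENNReal) 0 = 1 from
          indicator_of_mem rfl _,
        show ({0} : Set (Fin 3)).indicator (1 : Fin 3 → ENNReal) 1 = 0 from
          indicator_of_notMem (by decide) _,
        show ({0} : Set (Fin 3)).indicator (1 : Fin 3 → ENNReal) 2 = 0 from
          indicator_of_notMem (by decide) _]
      simp
    have h01 : μ {0, 1} = ENNReal.ofReal y := by
      rw [happ]
      rw [show ({0, 1} : Set (Fin 3)).indicator (1 : Fin 3 → ENNReal) 0 = 1 from
          indicator_of_mem (by decide) _,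
        show ({0, 1} : Set (Fin 3)).indicator (1 : Fin 3 → ENNReal) 1 = 1 from
          indicator_of_mem (by decide) _,
        show ({0, 1} : Set (Fin 3)).indicator (1 : Fin 3 → ENNReal) 2 = 0 from
          indicator_of_notMem (by decide) _]
      rw [mul_one, mul_one, mul_zero, add_zero, ← ENNReal.ofReal_add hx (by linarith)]
      norm_num
    refine ⟨Fin 3, inferInstance, μ, hprob,
      {0}, univ, {0, 1}, univ, trivial, trivial, trivial, trivial, ?_, ?_, ?_, ?_, ?_, ?_, ?_⟩
    · intro z hz
      simp only [mem_inter_iff, mem_univ, and_true, mem_singleton_iff, mem_insert_iff] at *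
      tauto
    · intro z hz
      simp only [mem_inter_iff, mem_univ, and_true, mem_compl_iff, mem_singleton_iff,
        mem_insert_iff] at *
      tauto
    · rw [measure_univ]; exact one_pos
    · rw [measure_univ]; exact one_pos
    · rw [condP, inter_univ, measure_univ, h0]
      simp [ENNReal.toReal_ofReal hx]
    · rw [condP, inter_univ, measure_univ, h01]
      simp [ENNReal.toReal_ofReal (by linarith : (0:ℝ) ≤ y)]
    · have e : (({0} : Set (Fin 3)) ∩ univ ∪ univᶜ) ∩ (({0, 1} : Set (Fin 3)) ∩ univ ∪ univᶜ)
          ∩ (univ ∪ univ) = {0} := by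
        simp only [inter_univ, compl_univ, union_empty, union_self]
        ext z
        simp only [mem_inter_iff, mem_singleton_iff, mem_insert_iff]
        constructor
        · rintro ⟨hz, -⟩; exact hz
        · intro hz; exact ⟨hz, Or.inl hz⟩
      rw [condP, e, union_self, measure_univ, h0]
      simp [ENNReal.toReal_ofReal hx]
end

section
/- Let n ≥ 1, let P be a probability measure, and let E₁, H₁, …, Eₙ, Hₙ be measurable events with P(Hᵢ) > 0 for all i; set pᵢ = P(Eᵢ|Hᵢ). Then max(p₁ + ⋯ + pₙ − (n−1), 0) ≤ P(⋂ᵢ((Eᵢ∩Hᵢ) ∪ Hᵢᶜ) | ⋃ᵢ Hᵢ) ≤ u, where u = 1 if pᵢ = 1 for at least one i, and u = (Σᵢ pᵢ/(1−pᵢ)) / (1 + Σᵢ pᵢ/(1−pᵢ)) if pᵢ < 1 for all i. -/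
open MeasureTheory Set
open scoped Classical

theorem quasi_conjunction_bounds_n {Ω : Type*} [MeasurableSpace Ω]
    (μ : Measure Ω) [IsProbabilityMeasure μ] (n : ℕ) (hn : 1 ≤ n)
    (E H : Fin n → Set Ω)
    (hE : ∀ i, MeasurableSet (E i)) (hH : ∀ i, MeasurableSet (H i))
    (hpos : ∀ i, 0 < μ (H i))
    (p : Fin n → ℝ) (hp : ∀ i, p i = condP μ (E i) (H i)) :
    max (∑ i, p i - ((n : ℝ) - 1)) 0 ≤
        condP μ (⋂ i, ((E i ∩ H i) ∪ (H i)ᶜ)) (⋃ i, H i) ∧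
      condP μ (⋂ i, ((E i ∩ H i) ∪ (H i)ᶜ)) (⋃ i, H i) ≤
        (if ∃ i, p i = 1 then 1
          else (∑ i, p i / (1 - p i)) / (1 + ∑ i, p i / (1 - p i))) := by
  have i0 : Fin n := ⟨0, hn⟩
  set C := ⋂ i, ((E i ∩ H i) ∪ (H i)ᶜ) with hCdef
  set D := ⋃ i, H i with hDdef
  have hCmeas : MeasurableSet C :=
    MeasurableSet.iInter fun i => ((hE i).inter (hH i)).union (hH i).compl
  -- reals
  set a : Fin n → ℝ := fun i => (μ (E i ∩ H i)).toReal with ha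
  set b : Fin n → ℝ := fun i => (μ (H i \ E i)).toReal with hb
  set h : Fin n → ℝ := fun i => (μ (H i)).toReal with hh
  set d : ℝ := (μ D).toReal with hd
  set c : ℝ := (μ (C ∩ D)).toReal with hc
  set w : ℝ := (μ (D \ C)).toReal with hw
  have ha0 : ∀ i, 0 ≤ a i := fun i => ENNReal.toReal_nonneg
  have hb0 : ∀ i, 0 ≤ b i := fun i => ENNReal.toReal_nonneg
  have hc0 : 0 ≤ c := ENNReal.toReal_nonneg
  have hw0 : 0 ≤ w := ENNReal.toReal_nonneg
  have hhpos : ∀ i, 0 < h i := fun i =>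
    ENNReal.toReal_pos (hpos i).ne' (measure_ne_top μ _)
  have habh : ∀ i, a i + b i = h i := by
    intro i
    have := measure_inter_add_diff (μ := μ) (H i) (hE i)
    have := congrArg ENNReal.toReal this
    rw [ENNReal.toReal_add (measure_ne_top μ _) (measure_ne_top μ _)] at this
    simpa [ha, hb, hh, Set.inter_comm] using this
  have hhd : ∀ i, h i ≤ d := fun i =>
    ENNReal.toReal_mono (measure_ne_top μ _) (measure_mono (subset_iUnion H i))
  have hdpos : 0 < d := lt_of_lt_of_le (hhpos i0) (hhd i0)
  have hcwd : c + w = d := by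
    have := measure_inter_add_diff (μ := μ) D hCmeas
    have := congrArg ENNReal.toReal this
    rw [ENNReal.toReal_add (measure_ne_top μ _) (measure_ne_top μ _)] at this
    simpa [hc, hw, hd, Set.inter_comm] using this
  -- complement identity
  have hDC : D \ C = ⋃ i, (H i \ E i) := by
    ext ω
    simp only [hCdef, hDdef, Set.mem_diff, Set.mem_iUnion, Set.mem_iInter,
      Set.mem_union, Set.mem_inter_iff, Set.mem_compl_iff, not_forall]
    constructor
    · rintro ⟨_, i, hi⟩
      exact ⟨i, by tauto⟩
    · rintro ⟨i, hi, hie⟩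
      exact ⟨⟨i, hi⟩, i, by tauto⟩
  have hCD_sub : C ∩ D ⊆ ⋃ i, (E i ∩ H i) := by
    rintro ω ⟨hωC, hωD⟩
    simp only [hDdef, Set.mem_iUnion] at hωD
    obtain ⟨i, hi⟩ := hωD
    have := (Set.mem_iInter.mp hωC i)
    rcases this with h' | h'
    · exact Set.mem_iUnion.mpr ⟨i, h'⟩
    · exact absurd hi h'
  have hwsum : w ≤ ∑ i, b i := by
    rw [hw, hDC]
    calc (μ (⋃ i, H i \ E i)).toReal ≤ (∑ i, μ (H i \ E i)).toReal :=
          ENNReal.toReal_mono (by simp [measure_ne_top]) (measure_iUnion_fintype_le μ _)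
      _ = ∑ i, b i := by
          rw [ENNReal.toReal_sum (fun i _ => measure_ne_top μ _)]
  have hbw : ∀ i, b i ≤ w := by
    intro i
    rw [hw, hDC]
    exact ENNReal.toReal_mono (measure_ne_top μ _)
      (measure_mono (subset_iUnion (fun j => H j \ E j) i))
  have hcsum : c ≤ ∑ i, a i := by
    calc c ≤ (μ (⋃ i, E i ∩ H i)).toReal :=
          ENNReal.toReal_mono (measure_ne_top μ _) (measure_mono hCD_sub)
      _ ≤ (∑ i, μ (E i ∩ H i)).toReal :=
          ENNReal.toReal_mono (by simp [measure_ne_top]) (measure_iUnion_fintype_le μ _)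
      _ = ∑ i, a i := by
          rw [ENNReal.toReal_sum (fun i _ => measure_ne_top μ _)]
  have hpah : ∀ i, p i = a i / h i := fun i => by rw [hp i]; rfl
  have h1p : ∀ i, 1 - p i = b i / h i := by
    intro i
    have hba : b i = h i - a i := by linarith [habh i]
    rw [hpah i, hba, sub_div, div_self (hhpos i).ne']
  have hp0 : ∀ i, 0 ≤ p i := fun i => by
    rw [hpah i]; exact div_nonneg (ha0 i) (hhpos i).le
  have hp1 : ∀ i, p i ≤ 1 := by
    intro i
    rw [hpah i]
    rw [div_le_one (hhpos i)]
    linarith [habh i, hb0 i]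
  have hq : condP μ C D = c / d := rfl
  -- lower bound
  have hwd_le : w / d ≤ ∑ i, (1 - p i) := by
    calc w / d ≤ (∑ i, b i) / d := by gcongr
      _ = ∑ i, b i / d := Finset.sum_div _ _ _
      _ ≤ ∑ i, b i / h i := by
          apply Finset.sum_le_sum
          intro i _
          exact div_le_div_of_nonneg_left (hb0 i) (hhpos i) (hhd i)
      _ = ∑ i, (1 - p i) := by
          apply Finset.sum_congr rfl
          intro i _
          exact (h1p i).symm
  have hsum1p : ∑ i, (1 - p i) = (n : ℝ) - ∑ i, p i := by
    rw [Finset.sum_sub_distrib]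
    simp
  have hlower : max (∑ i, p i - ((n : ℝ) - 1)) 0 ≤ condP μ C D := by
    rw [hq]
    apply max_le
    · have hcd : c / d = 1 - w / d := by
        field_simp
        linarith [hcwd]
      rw [hcd]
      rw [hsum1p] at hwd_le
      linarith
    · exact div_nonneg hc0 hdpos.le
  refine ⟨hlower, ?_⟩
  by_cases hex : ∃ i, p i = 1
  · rw [if_pos hex, hq, div_le_one hdpos]
    exact ENNReal.toReal_mono (measure_ne_top μ _) (measure_mono Set.inter_subset_right)
  · rw [if_neg hex]
    push_neg at hex
    have hplt : ∀ i, p i < 1 := fun i => lt_of_le_of_ne (hp1 i) (hex i)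
    have h1ppos : ∀ i, 0 < 1 - p i := fun i => by linarith [hplt i]
    have hbpos : ∀ i, 0 < b i := by
      intro i
      have h1 : 0 < 1 - p i := h1ppos i
      rw [h1p i] at h1
      have := mul_pos h1 (hhpos i)
      rwa [div_mul_cancel₀ _ (hhpos i).ne'] at this
    set s : ℝ := ∑ i, p i / (1 - p i) with hs
    have hterm0 : ∀ i, 0 ≤ p i / (1 - p i) := fun i =>
      div_nonneg (hp0 i) (h1ppos i).le
    have hs0 : 0 ≤ s := Finset.sum_nonneg fun i _ => hterm0 i
    have hai : ∀ i, a i = p i / (1 - p i) * b i := by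
      intro i
      have e1 : p i * h i = a i := by
        rw [hpah i, div_mul_cancel₀ _ (hhpos i).ne']
      have e2 : (1 - p i) * h i = b i := by
        rw [h1p i, div_mul_cancel₀ _ (hhpos i).ne']
      have key : p i * b i = (1 - p i) * a i := by
        rw [← e2, ← e1]; ring
      rw [div_mul_eq_mul_div, eq_div_iff (h1ppos i).ne']
      linarith [key]
    have hcsw : c ≤ s * w := by
      calc c ≤ ∑ i, a i := hcsum
        _ ≤ ∑ i, p i / (1 - p i) * w := by
            apply Finset.sum_le_sum
            intro i _
            rw [hai i]
            exact mul_le_mul_of_nonneg_left (hbw i) (hterm0 i)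
        _ = s * w := by rw [hs, Finset.sum_mul]
    rw [hq, div_le_div_iff₀ hdpos (by linarith : (0:ℝ) < 1 + s)]
    nlinarith [hcsw, hcwd, hs0, hc0, hw0]
end

section
/- Let P be a probability measure and let A, H, B, K be measurable events with P(H) > 0 and P(K) > 0. Set x = P(A|H), y = P(B|K), and z = P((A∩H) ∪ (B∩K) | H ∪ K). Then T₀ᴴ(x,y) ≤ z ≤ min(x + y, 1), where T₀ᴴ(x,y) = xy/(x + y − xy) if (x,y) ≠ (0,0) and T₀ᴴ(0,0) = 0. -/
open MeasureTheory Set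

/-!
For `x, y > 0` the Hamacher product is `(x⁻¹ + y⁻¹ - 1)⁻¹`, so the lower bound says that the odds
against the quasi disjunction, `z⁻¹ - 1 = P((H ∪ K) \ E) / P(E)` with `E = (A ∩ H) ∪ (B ∩ K)`, are
at most the sum of the odds `P(H \ A) / P(A ∩ H)` and `P(K \ B) / P(B ∩ K)`. This holds because
`(H ∪ K) \ E ⊆ (H \ A) ∪ (K \ B)` while `P(E)` dominates both `P(A ∩ H)` and `P(B ∩ K)`.
The upper bound is subadditivity of `P(· | H ∪ K)` together with `P(A ∩ H | H ∪ K) ≤ P(A | H)`.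
-/

noncomputable def hamacherProduct (x y : ℝ) : ℝ :=
  if (x, y) = ((0 : ℝ), (0 : ℝ)) then 0 else x * y / (x + y - x * y)

lemma hamacherProduct_eq_zero_of_mul_eq_zero {x y : ℝ} (h : x * y = 0) :
    hamacherProduct x y = 0 := by
  simp [hamacherProduct, h]

lemma hamacherProduct_eq_inv {x y : ℝ} (hx : 0 < x) (hy : 0 < y) :
    hamacherProduct x y = (x⁻¹ + y⁻¹ - 1)⁻¹ := by
  have hxy : (x, y) ≠ ((0 : ℝ), (0 : ℝ)) := by simp [hx.ne']
  rw [hamacherProduct, if_neg hxy]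
  field_simp
  ring

lemma hamacherProduct_le_of_inv_sub_one_le {x y z : ℝ} (hx : 0 < x) (hy : 0 < y) (hz : 0 < z)
    (h : z⁻¹ - 1 ≤ (x⁻¹ - 1) + (y⁻¹ - 1)) : hamacherProduct x y ≤ z := by
  rw [hamacherProduct_eq_inv hx hy]
  simpa using inv_anti₀ (inv_pos.2 hz) (by linarith : z⁻¹ ≤ x⁻¹ + y⁻¹ - 1)

section ConditionalProbability

variable {Ω : Type*} [MeasurableSpace Ω] {μ : Measure Ω} {E F H H' : Set Ω}

lemma condP_eq_measureReal : condP μ E H = μ.real (E ∩ H) / μ.real H := rfl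

lemma condP_union_le : condP μ (E ∪ F) H ≤ condP μ E H + condP μ F H := by
  simp only [condP_eq_measureReal, union_inter_distrib_right, ← add_div]
  exact div_le_div_of_nonneg_right (measureReal_union_le _ _) measureReal_nonneg

lemma condP_nonneg : 0 ≤ condP μ E H := by
  rw [condP_eq_measureReal]
  positivity

variable [IsFiniteMeasure μ]

lemma condP_le_one : condP μ E H ≤ 1 :=
  div_le_one_of_le₀ (measureReal_mono inter_subset_right) measureReal_nonneg

lemma condP_pos_iff : 0 < condP μ E H ↔ 0 < μ.real (E ∩ H) := by
  refine ⟨fun h ↦ measureReal_nonneg.lt_of_ne fun h0 ↦ ?_, fun h ↦ ?_⟩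
  · simp [condP_eq_measureReal, ← h0] at h
  · exact div_pos h (h.trans_le (measureReal_mono inter_subset_right))

lemma condP_inter_le_of_subset (hH : H ⊆ H') : condP μ (E ∩ H) H' ≤ condP μ E H := by
  rw [condP_eq_measureReal, inter_assoc, inter_eq_left.2 hH, condP_eq_measureReal]
  rcases (measureReal_nonneg (μ := μ) (s := H)).eq_or_lt with h0 | hpos
  · have : μ.real (E ∩ H) = 0 :=
      le_antisymm (h0 ▸ measureReal_mono inter_subset_right) measureReal_nonneg
    simp [this]
  · exact div_le_div_of_nonneg_left measureReal_nonneg hpos (measureReal_mono hH)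

lemma inv_condP_sub_one (hE : MeasurableSet E) (hpos : μ.real (E ∩ H) ≠ 0) :
    (condP μ E H)⁻¹ - 1 = μ.real (H \ E) / μ.real (E ∩ H) := by
  have hsplit := measureReal_inter_add_sdiff (μ := μ) (s := H) hE
  rw [inter_comm] at hsplit
  rw [condP_eq_measureReal, inv_div, ← hsplit]
  field_simp
  ring

end ConditionalProbability

section QuasiDisjunction

variable {Ω : Type*} [MeasurableSpace Ω] {μ : Measure Ω} [IsFiniteMeasure μ] {A H B K : Set Ω}

lemma condP_quasiDisjunction_le_add :
    condP μ ((A ∩ H) ∪ (B ∩ K)) (H ∪ K) ≤ condP μ A H + condP μ B K :=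
  condP_union_le.trans <|
    add_le_add (condP_inter_le_of_subset subset_union_left)
      (condP_inter_le_of_subset subset_union_right)

lemma inv_condP_quasiDisjunction_sub_one_le (hA : MeasurableSet A) (hH : MeasurableSet H)
    (hB : MeasurableSet B) (hK : MeasurableSet K)
    (ha : 0 < μ.real (A ∩ H)) (hb : 0 < μ.real (B ∩ K)) :
    (condP μ ((A ∩ H) ∪ (B ∩ K)) (H ∪ K))⁻¹ - 1 ≤
      ((condP μ A H)⁻¹ - 1) + ((condP μ B K)⁻¹ - 1) := by
  set E := (A ∩ H) ∪ (B ∩ K)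
  have hEH : E ∩ (H ∪ K) = E :=
    inter_eq_left.2 (union_subset_union inter_subset_right inter_subset_right)
  have haE : μ.real (A ∩ H) ≤ μ.real E := measureReal_mono subset_union_left
  have hbE : μ.real (B ∩ K) ≤ μ.real E := measureReal_mono subset_union_right
  have hcover : (H ∪ K) \ E ⊆ (H \ A) ∪ (K \ B) := by
    intro ω
    simp only [E, mem_union, mem_sdiff, mem_inter_iff]
    tauto
  rw [inv_condP_sub_one ((hA.inter hH).union (hB.inter hK)) (hEH ▸ (ha.trans_le haE).ne'),
    inv_condP_sub_one hA ha.ne', inv_condP_sub_one hB hb.ne', hEH]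
  calc μ.real ((H ∪ K) \ E) / μ.real E
      ≤ (μ.real (H \ A) + μ.real (K \ B)) / μ.real E :=
        div_le_div_of_nonneg_right
          ((measureReal_mono hcover).trans (measureReal_union_le _ _)) measureReal_nonneg
    _ = μ.real (H \ A) / μ.real E + μ.real (K \ B) / μ.real E := add_div _ _ _
    _ ≤ μ.real (H \ A) / μ.real (A ∩ H) + μ.real (K \ B) / μ.real (B ∩ K) :=
        add_le_add (div_le_div_of_nonneg_left measureReal_nonneg ha haE)
          (div_le_div_of_nonneg_left measureReal_nonneg hb hbE)

lemma hamacherProduct_le_condP_quasiDisjunction (hA : MeasurableSet A) (hH : MeasurableSet H)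
    (hB : MeasurableSet B) (hK : MeasurableSet K) :
    hamacherProduct (condP μ A H) (condP μ B K) ≤ condP μ ((A ∩ H) ∪ (B ∩ K)) (H ∪ K) := by
  by_cases hxy : 0 < condP μ A H ∧ 0 < condP μ B K
  · obtain ⟨hx, hy⟩ := hxy
    have ha := condP_pos_iff.1 hx
    refine hamacherProduct_le_of_inv_sub_one_le hx hy (condP_pos_iff.2 ?_)
      (inv_condP_quasiDisjunction_sub_one_le hA hH hB hK ha (condP_pos_iff.1 hy))
    exact ha.trans_le (measureReal_mono (subset_inter subset_union_left
      (inter_subset_right.trans subset_union_left)))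
  · have hxy0 : condP μ A H * condP μ B K = 0 := by
      rw [not_and_or, not_lt, not_lt] at hxy
      rcases hxy with hx | hy
      · simp [le_antisymm hx condP_nonneg]
      · simp [le_antisymm hy condP_nonneg]
    rw [hamacherProduct_eq_zero_of_mul_eq_zero hxy0]
    exact condP_nonneg

end QuasiDisjunction

theorem quasi_disjunction_bounds_general {Ω : Type*} [MeasurableSpace Ω]
    (μ : Measure Ω) [IsProbabilityMeasure μ] (A H B K : Set Ω)
    (hA : MeasurableSet A) (hH : MeasurableSet H) (hB : MeasurableSet B) (hK : MeasurableSet K)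
    (x y z : ℝ) (hx : x = condP μ A H) (hy : y = condP μ B K)
    (hz : z = condP μ ((A ∩ H) ∪ (B ∩ K)) (H ∪ K)) :
    (if (x, y) = ((0 : ℝ), (0 : ℝ)) then 0 else x * y / (x + y - x * y)) ≤ z ∧
      z ≤ min (x + y) 1 := by
  subst hx hy hz
  exact ⟨hamacherProduct_le_condP_quasiDisjunction hA hH hB hK,
    le_min condP_quasiDisjunction_le_add condP_le_one⟩

theorem quasi_disjunction_bounds {Ω : Type*} [MeasurableSpace Ω]
    (μ : Measure Ω) [IsProbabilityMeasure μ] (A H B K : Set Ω)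
    (hA : MeasurableSet A) (hH : MeasurableSet H) (hB : MeasurableSet B) (hK : MeasurableSet K)
    (hHpos : 0 < μ H) (hKpos : 0 < μ K)
    (x y z : ℝ) (hx : x = condP μ A H) (hy : y = condP μ B K)
    (hz : z = condP μ ((A ∩ H) ∪ (B ∩ K)) (H ∪ K)) :
    (if (x, y) = ((0 : ℝ), (0 : ℝ)) then 0 else x * y / (x + y - x * y)) ≤ z ∧
      z ≤ min (x + y) 1 :=
  quasi_disjunction_bounds_general μ A H B K hA hH hB hK x y z hx hy hz
end

section
/- Let P be a probability measure and let A, H, K be measurable events with P(H) > 0 and P(K) > 0. Set x = P(A|H) and y = P(A|K). Then T₀ᴴ(x,y) ≤ P(A | H ∪ K) ≤ S₀ᴴ(x,y), where T₀ᴴ(x,y) = xy/(x + y − xy) if (x,y) ≠ (0,0), T₀ᴴ(0,0) = 0, S₀ᴴ(x,y) = (x + y − 2xy)/(1 − xy) if (x,y) ≠ (1,1), and S₀ᴴ(1,1) = 1. -/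
open MeasureTheory Set

lemma aux_lower {Ω : Type*} [MeasurableSpace Ω]
    (μ : Measure Ω) [IsProbabilityMeasure μ] (A H K : Set Ω)
    (hA : MeasurableSet A) (hH : MeasurableSet H) (hK : MeasurableSet K)
    (hHpos : 0 < μ H) (hKpos : 0 < μ K) :
    condP μ A H * condP μ A K /
        (condP μ A H + condP μ A K - condP μ A H * condP μ A K)
      ≤ condP μ A (H ∪ K) := by
  have mono : ∀ s t : Set Ω, s ⊆ t → (μ s).toReal ≤ (μ t).toReal := fun s t hst =>
    ENNReal.toReal_mono (measure_ne_top μ t) (measure_mono hst)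
  set a := (μ (A ∩ H)).toReal with ha_def
  set b := (μ (A ∩ K)).toReal with hb_def
  set h := (μ H).toReal with hh_def
  set k := (μ K).toReal with hk_def
  set c := (μ (A ∩ (H ∪ K))).toReal with hc_def
  set u := (μ (H ∪ K)).toReal with hu_def
  set t := (μ (A ∩ (H ∩ K))).toReal with ht_def
  set m := (μ (H ∩ K)).toReal with hm_def
  have hpos : 0 < h := ENNReal.toReal_pos hHpos.ne' (measure_ne_top μ H)
  have kpos : 0 < k := ENNReal.toReal_pos hKpos.ne' (measure_ne_top μ K)
  have upos : 0 < u := lt_of_lt_of_le hpos (mono H (H ∪ K) subset_union_left)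
  have ha0 : 0 ≤ a := ENNReal.toReal_nonneg
  have hb0 : 0 ≤ b := ENNReal.toReal_nonneg
  have hah : a ≤ h := mono _ _ inter_subset_right
  have hbk : b ≤ k := mono _ _ inter_subset_right
  have hta : t ≤ a := mono _ _ (inter_subset_inter_right A inter_subset_left)
  have htb : t ≤ b := mono _ _ (inter_subset_inter_right A inter_subset_right)
  have htm : t ≤ m := mono _ _ inter_subset_right
  have hcu : c ≤ u := mono _ _ inter_subset_right
  -- inclusion-exclusion
  have hum : u + m = h + k := by
    have e := measure_union_add_inter (μ := μ) H hK
    have := congrArg ENNReal.toReal e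
    rwa [ENNReal.toReal_add (measure_ne_top μ _) (measure_ne_top μ _),
      ENNReal.toReal_add (measure_ne_top μ _) (measure_ne_top μ _)] at this
  have hct : c + t = a + b := by
    have e := measure_union_add_inter (μ := μ) (A ∩ H) (hA.inter hK)
    have seq1 : (A ∩ H) ∪ (A ∩ K) = A ∩ (H ∪ K) := (inter_union_distrib_left A H K).symm
    have seq2 : (A ∩ H) ∩ (A ∩ K) = A ∩ (H ∩ K) := by ext ω; simp; tauto
    rw [seq1, seq2] at e
    have := congrArg ENNReal.toReal e
    rwa [ENNReal.toReal_add (measure_ne_top μ _) (measure_ne_top μ _),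
      ENNReal.toReal_add (measure_ne_top μ _) (measure_ne_top μ _)] at this
  have hz : condP μ A (H ∪ K) = c / u := rfl
  have hx : condP μ A H = a / h := rfl
  have hy : condP μ A K = b / k := rfl
  rw [hz, hx, hy]
  have hc0 : 0 ≤ c := ENNReal.toReal_nonneg
  rcases eq_or_lt_of_le ha0 with ha | ha
  · rw [← ha]; simp; positivity
  rcases eq_or_lt_of_le hb0 with hb | hb
  · rw [← hb]; simp; positivity
  have hdpos : 0 < a * k + b * h - a * b := by nlinarith
  have h1 : a / h * (b / k) = a * b / (h * k) := div_mul_div_comm a h b k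
  have h2 : a / h + b / k - a / h * (b / k) = (a * k + b * h - a * b) / (h * k) := by
    field_simp
  have heq : a / h * (b / k) / (a / h + b / k - a / h * (b / k))
      = a * b / (a * k + b * h - a * b) := by
    rw [h2, h1, div_div_div_cancel_right₀ (by positivity : h * k ≠ 0)]
  rw [heq, div_le_div_iff₀ hdpos upos]
  have hc2 : c = a + b - t := by linarith
  have hu2 : u = h + k - m := by linarith
  rw [hc2, hu2]
  nlinarith [mul_nonneg (mul_nonneg ha0 (sub_nonneg.2 hbk)) (sub_nonneg.2 hta),
    mul_nonneg (mul_nonneg hb0 (sub_nonneg.2 hah)) (sub_nonneg.2 htb),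
    mul_nonneg (mul_nonneg ha0 hb0) (sub_nonneg.2 htm)]

lemma condP_compl {Ω : Type*} [MeasurableSpace Ω]
    (μ : Measure Ω) [IsProbabilityMeasure μ] (E S : Set Ω)
    (hE : MeasurableSet E) (hS : 0 < μ S) :
    condP μ Eᶜ S = 1 - condP μ E S := by
  have e := measure_inter_add_diff (μ := μ) S hE
  have seq : Eᶜ ∩ S = S \ E := by ext ω; simp [Set.diff_eq]; tauto
  have spos : 0 < (μ S).toReal := ENNReal.toReal_pos hS.ne' (measure_ne_top μ S)
  have e2 := congrArg ENNReal.toReal e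
  rw [ENNReal.toReal_add (measure_ne_top μ _) (measure_ne_top μ _)] at e2
  unfold condP
  rw [seq, inter_comm E S]
  field_simp
  linarith

theorem or_rule_bounds {Ω : Type*} [MeasurableSpace Ω]
    (μ : Measure Ω) [IsProbabilityMeasure μ] (A H K : Set Ω)
    (hA : MeasurableSet A) (hH : MeasurableSet H) (hK : MeasurableSet K)
    (hHpos : 0 < μ H) (hKpos : 0 < μ K)
    (x y : ℝ) (hx : x = condP μ A H) (hy : y = condP μ A K) :
    (if (x, y) = ((0 : ℝ), (0 : ℝ)) then 0 else x * y / (x + y - x * y)) ≤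
        condP μ A (H ∪ K) ∧
      condP μ A (H ∪ K) ≤
        (if (x, y) = ((1 : ℝ), (1 : ℝ)) then 1 else (x + y - 2 * x * y) / (1 - x * y)) := by
  have mono : ∀ s t : Set Ω, s ⊆ t → (μ s).toReal ≤ (μ t).toReal := fun s t hst =>
    ENNReal.toReal_mono (measure_ne_top μ t) (measure_mono hst)
  have hUpos : 0 < μ (H ∪ K) := hHpos.trans_le (measure_mono subset_union_left)
  have hpos : 0 < (μ H).toReal := ENNReal.toReal_pos hHpos.ne' (measure_ne_top μ H)
  have kpos : 0 < (μ K).toReal := ENNReal.toReal_pos hKpos.ne' (measure_ne_top μ K)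
  have upos : 0 < (μ (H ∪ K)).toReal := ENNReal.toReal_pos hUpos.ne' (measure_ne_top μ _)
  have hx0 : 0 ≤ x := by
    rw [hx]; exact div_nonneg ENNReal.toReal_nonneg ENNReal.toReal_nonneg
  have hy0 : 0 ≤ y := by
    rw [hy]; exact div_nonneg ENNReal.toReal_nonneg ENNReal.toReal_nonneg
  have hx1 : x ≤ 1 := by
    rw [hx]; exact div_le_one_of_le₀ (mono _ _ inter_subset_right) ENNReal.toReal_nonneg
  have hy1 : y ≤ 1 := by
    rw [hy]; exact div_le_one_of_le₀ (mono _ _ inter_subset_right) ENNReal.toReal_nonneg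
  constructor
  · split_ifs with h0
    · exact div_nonneg ENNReal.toReal_nonneg ENNReal.toReal_nonneg
    · rw [hx, hy]; exact aux_lower μ A H K hA hH hK hHpos hKpos
  · have hcompl := aux_lower μ Aᶜ H K hA.compl hH hK hHpos hKpos
    rw [condP_compl μ A H hA hHpos, condP_compl μ A K hA hKpos,
      condP_compl μ A (H ∪ K) hA hUpos, ← hx, ← hy] at hcompl
    split_ifs with h1
    · rw [show condP μ A (H ∪ K) = (μ (A ∩ (H ∪ K))).toReal / (μ (H ∪ K)).toReal from rfl]
      exact div_le_one_of_le₀ (mono _ _ inter_subset_right) ENNReal.toReal_nonneg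
    · have hne : x ≠ 1 ∨ y ≠ 1 := by
        by_contra hc
        push_neg at hc
        exact h1 (by rw [hc.1, hc.2])
      have hxy : x * y < 1 := by
        rcases hne with hne | hne
        · have : x < 1 := lt_of_le_of_ne hx1 hne
          nlinarith
        · have : y < 1 := lt_of_le_of_ne hy1 hne
          nlinarith
      have key : 1 - (1 - x) * (1 - y) / ((1 - x) + (1 - y) - (1 - x) * (1 - y))
          = (x + y - 2 * x * y) / (1 - x * y) := by
        have hd : (1 : ℝ) - x * y ≠ 0 := by linarith
        rw [show (1 - x) + (1 - y) - (1 - x) * (1 - y) = 1 - x * y by ring,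
          eq_div_iff hd, sub_mul, div_mul_cancel₀ _ hd]
        ring
      linarith
end

section
/- Let n ≥ 2 and (p₁,…,pₙ) ∈ [0,1]ⁿ. (a) For every γ ∈ [0,1): min(p₁ + ⋯ + pₙ, 1) ≤ γ if and only if p₁ + ⋯ + pₙ ≤ γ. (b) For every γ ∈ (0,1]: the iterated Hamacher t-norm satisfies T₀ᴴ(p₁,…,pₙ) ≥ γ if and only if p₁ ≥ γ and, for each k = 1,…,n−1, p_{k+1} ≥ γ·l_k/(l_k(1+γ) − γ), where l₁ = p₁ and l_k = T₀ᴴ(p₁,…,p_k). -/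
open Finset

/-- The Hamacher t-norm with parameter 0. -/
noncomputable def T0H (x y : ℝ) : ℝ :=
  if (x, y) = ((0 : ℝ), (0 : ℝ)) then 0 else x * y / (x + y - x * y)

/-- Iterated Hamacher t-norm: `T0Hiter p k = T₀ᴴ(p 0, …, p k)`. -/
noncomputable def T0Hiter (p : ℕ → ℝ) : ℕ → ℝ
  | 0 => p 0
  | k + 1 => T0H (T0Hiter p k) (p (k + 1))

private lemma T0H_denom_pos {x y : ℝ} (hx0 : 0 ≤ x) (hx1 : x ≤ 1) (hy0 : 0 ≤ y)
    (hy1 : y ≤ 1) (h : ¬ ((x, y) = ((0:ℝ), (0:ℝ)))) : 0 < x + y - x * y := by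
  rcases eq_or_lt_of_le hx0 with h' | h'
  · rcases eq_or_lt_of_le hy0 with h'' | h''
    · exact absurd (by simp [← h', ← h'']) h
    · nlinarith
  · nlinarith

private lemma T0H_le_left {x y : ℝ} (hx0 : 0 ≤ x) (hx1 : x ≤ 1) (hy0 : 0 ≤ y)
    (hy1 : y ≤ 1) : T0H x y ≤ x := by
  unfold T0H
  split
  · exact hx0
  · rename_i h
    have hd := T0H_denom_pos hx0 hx1 hy0 hy1 h
    rw [div_le_iff₀ hd]
    nlinarith [mul_nonneg (mul_nonneg hx0 hx0) (sub_nonneg.2 hy1)]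

private lemma T0H_le_right {x y : ℝ} (hx0 : 0 ≤ x) (hx1 : x ≤ 1) (hy0 : 0 ≤ y)
    (hy1 : y ≤ 1) : T0H x y ≤ y := by
  unfold T0H
  split
  · exact hy0
  · rename_i h
    have hd := T0H_denom_pos hx0 hx1 hy0 hy1 h
    rw [div_le_iff₀ hd]
    nlinarith [mul_nonneg (mul_nonneg hy0 hy0) (sub_nonneg.2 hx1)]

private lemma T0H_nonneg {x y : ℝ} (hx0 : 0 ≤ x) (hx1 : x ≤ 1) (hy0 : 0 ≤ y)
    (hy1 : y ≤ 1) : 0 ≤ T0H x y := by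
  unfold T0H
  split
  · exact le_refl 0
  · rename_i h
    have hd := T0H_denom_pos hx0 hx1 hy0 hy1 h
    exact div_nonneg (mul_nonneg hx0 hy0) hd.le

private lemma T0H_step {γ l q : ℝ} (hγ : 0 < γ) (hl0 : 0 ≤ l) (hl1 : l ≤ 1)
    (hq0 : 0 ≤ q) (hq1 : q ≤ 1) :
    γ ≤ T0H l q ↔ γ ≤ l ∧ γ * l / (l * (1 + γ) - γ) ≤ q := by
  constructor
  · intro h
    have hgl : γ ≤ l := le_trans h (T0H_le_left hl0 hl1 hq0 hq1)
    have hgq : γ ≤ q := le_trans h (T0H_le_right hl0 hl1 hq0 hq1)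
    have hd : 0 < l + q - l * q := by nlinarith
    have hne : ¬ ((l, q) = ((0:ℝ), (0:ℝ))) := by
      simp only [Prod.mk.injEq, not_and]
      intro h0; nlinarith
    have hT : T0H l q = l * q / (l + q - l * q) := by
      unfold T0H; rw [if_neg hne]
    rw [hT, le_div_iff₀ hd] at h
    have hD : 0 < l * (1 + γ) - γ := by nlinarith
    refine ⟨hgl, ?_⟩
    rw [div_le_iff₀ hD]
    nlinarith
  · rintro ⟨hgl, h2⟩
    have hD : 0 < l * (1 + γ) - γ := by nlinarith
    rw [div_le_iff₀ hD] at h2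
    have hqpos : 0 < q := by nlinarith
    have hd : 0 < l + q - l * q := by nlinarith
    have hne : ¬ ((l, q) = ((0:ℝ), (0:ℝ))) := by
      simp only [Prod.mk.injEq, not_and]
      intro h0; nlinarith
    have hT : T0H l q = l * q / (l + q - l * q) := by
      unfold T0H; rw [if_neg hne]
    rw [hT, le_div_iff₀ hd]
    nlinarith

theorem quasi_or_premise_bounds (n : ℕ) (hn : 2 ≤ n) (p : ℕ → ℝ)
    (hp : ∀ i < n, p i ∈ Set.Icc (0 : ℝ) 1) :
    (∀ γ : ℝ, 0 ≤ γ → γ < 1 →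
      (min (∑ i ∈ Finset.range n, p i) 1 ≤ γ ↔
        ∑ i ∈ Finset.range n, p i ≤ γ)) ∧
    (∀ γ : ℝ, 0 < γ → γ ≤ 1 →
      (γ ≤ T0Hiter p (n - 1) ↔
        γ ≤ p 0 ∧ ∀ k, k + 1 < n →
          γ * T0Hiter p k / (T0Hiter p k * (1 + γ) - γ) ≤ p (k + 1))) := by
  have hiter : ∀ k, k < n → T0Hiter p k ∈ Set.Icc (0 : ℝ) 1 := by
    intro k
    induction k with
    | zero => intro hk; exact hp 0 hk
    | succ m ih =>
      intro hk
      have hm := ih (by omega)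
      have hpm := hp (m + 1) hk
      obtain ⟨h1, h2⟩ := hm
      obtain ⟨h3, h4⟩ := hpm
      exact ⟨T0H_nonneg h1 h2 h3 h4,
        le_trans (T0H_le_left h1 h2 h3 h4) h2⟩
  constructor
  · intro γ hγ0 hγ1
    constructor
    · intro h
      rcases le_or_gt (∑ i ∈ Finset.range n, p i) 1 with h1 | h1
      · rwa [min_eq_left h1] at h
      · rw [min_eq_right h1.le] at h; linarith
    · intro h; exact le_trans (min_le_left _ _) h
  · intro γ hγ0 hγ1
    have main : ∀ m, m < n → (γ ≤ T0Hiter p m ↔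
        γ ≤ p 0 ∧ ∀ k, k + 1 ≤ m →
          γ * T0Hiter p k / (T0Hiter p k * (1 + γ) - γ) ≤ p (k + 1)) := by
      intro m
      induction m with
      | zero =>
        intro _
        simp [T0Hiter]
      | succ m ih =>
        intro hm
        have hmn : m < n := by omega
        obtain ⟨hl0, hl1⟩ := hiter m hmn
        obtain ⟨hq0, hq1⟩ := hp (m + 1) hm
        have step := T0H_step hγ0 hl0 hl1 hq0 hq1 (l := T0Hiter p m) (q := p (m + 1))
        show γ ≤ T0H (T0Hiter p m) (p (m + 1)) ↔ _
        rw [step, ih hmn]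
        constructor
        · rintro ⟨⟨h0, hall⟩, hm1⟩
          refine ⟨h0, fun k hk => ?_⟩
          rcases Nat.lt_or_ge k m with h | h
          · exact hall k (by omega)
          · have : k = m := by omega
            subst this; exact hm1
        · rintro ⟨h0, hall⟩
          exact ⟨⟨h0, fun k hk => hall k (by omega)⟩, hall m (by omega)⟩
    have := main (n - 1) (by omega)
    rw [this]
    constructor
    · rintro ⟨h0, hall⟩
      exact ⟨h0, fun k hk => hall k (by omega)⟩
    · rintro ⟨h0, hall⟩
      exact ⟨h0, fun k hk => hall k (by omega)⟩
end

section
/- Let P be a probability measure and let A, B be measurable events with P(A) > 0 and P(B) > 0. Set x = P(A|B) and y = P(B|A). Then the probability of the biconditional event satisfies P(A ∩ B | A ∪ B) = T₀ᴴ(x,y), where T₀ᴴ(x,y) = xy/(x + y − xy) if (x,y) ≠ (0,0) and T₀ᴴ(0,0) = 0. -/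
open MeasureTheory Set

theorem biconditional_event_prob {Ω : Type*} [MeasurableSpace Ω]
    (μ : Measure Ω) [IsProbabilityMeasure μ] (A B : Set Ω)
    (hA : MeasurableSet A) (hB : MeasurableSet B)
    (hApos : 0 < μ A) (hBpos : 0 < μ B)
    (x y : ℝ) (hx : x = condP μ A B) (hy : y = condP μ B A) :
    condP μ (A ∩ B) (A ∪ B) =
      (if (x, y) = ((0 : ℝ), (0 : ℝ)) then 0 else x * y / (x + y - x * y)) := by
  have hAfin : μ A ≠ ⊤ := measure_ne_top μ A
  have hBfin : μ B ≠ ⊤ := measure_ne_top μ B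
  have hUfin : μ (A ∪ B) ≠ ⊤ := measure_ne_top μ (A ∪ B)
  have hIfin : μ (A ∩ B) ≠ ⊤ := measure_ne_top μ (A ∩ B)
  set a := (μ A).toReal with ha_def
  set b := (μ B).toReal with hb_def
  set i := (μ (A ∩ B)).toReal with hi_def
  set u := (μ (A ∪ B)).toReal with hu_def
  have ha : 0 < a := ENNReal.toReal_pos hApos.ne' hAfin
  have hb : 0 < b := ENNReal.toReal_pos hBpos.ne' hBfin
  have hsum : u + i = a + b := by
    rw [ha_def, hb_def, hi_def, hu_def, ← ENNReal.toReal_add hUfin hIfin,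
      ← ENNReal.toReal_add hAfin hBfin, measure_union_add_inter A hB]
  have hu : 0 < u := by
    have h1 : μ A ≤ μ (A ∪ B) := measure_mono subset_union_left
    exact lt_of_lt_of_le ha ((ENNReal.toReal_le_toReal hAfin hUfin).mpr h1)
  have hInter : (A ∩ B) ∩ (A ∪ B) = A ∩ B :=
    inter_eq_left.mpr (inter_subset_left.trans subset_union_left)
  have hL : condP μ (A ∩ B) (A ∪ B) = i / u := by
    unfold condP; rw [hInter]
  have hxv : x = i / b := by rw [hx]; unfold condP; rfl
  have hyv : y = i / a := by rw [hy]; unfold condP; rw [inter_comm]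
  have hi0 : 0 ≤ i := ENNReal.toReal_nonneg
  rcases eq_or_lt_of_le hi0 with hiz | hip
  · have hx0 : x = 0 := by rw [hxv, ← hiz]; simp
    have hy0 : y = 0 := by rw [hyv, ← hiz]; simp
    rw [hL, hx0, hy0, ← hiz]
    simp
  · have hx0 : x ≠ 0 := by
      rw [hxv]; positivity
    rw [if_neg (by simp [hx0])]
    rw [hL, hxv, hyv]
    have hd : 0 < a + b - i := by linarith
    have hden : i / b + i / a - i / b * (i / a) = i * (a + b - i) / (a * b) := by
      field_simp
    rw [hden]
    have hueq : u = a + b - i := by linarith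
    rw [hueq]
    field_simp
end

section
/- Let n ≥ 2 and let A₁, …, Aₙ be subsets of a set Ω, with indices taken cyclically (A_{n+1} = A₁). Then the quasi conjunction of the conditional events A₂|A₁, A₃|A₂, …, Aₙ|A_{n−1}, A₁|Aₙ equals the conditional event (A₁∩⋯∩Aₙ) | (A₁∪⋯∪Aₙ): explicitly, ⋂_{i=1}^{n} ((A_{i+1} ∩ A_i) ∪ A_iᶜ) ∩ (A₁ ∪ ⋯ ∪ Aₙ) = A₁ ∩ ⋯ ∩ Aₙ. -/
open Set

theorem n_conditional_quasi_conjunction {Ω : Type*} (n : ℕ) (hn : 2 ≤ n) (A : ℕ → Set Ω) :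
    (⋂ i ∈ Finset.range n, ((A ((i + 1) % n) ∩ A i) ∪ (A i)ᶜ)) ∩ (⋃ i ∈ Finset.range n, A i) =
      ⋂ i ∈ Finset.range n, A i := by
  have hnpos : 0 < n := by omega
  ext x
  simp only [mem_inter_iff, mem_iInter, mem_iUnion, Finset.mem_range, mem_union, mem_compl_iff,
    mem_inter_iff]
  constructor
  · rintro ⟨hall, j, hj, hxj⟩
    have step : ∀ i < n, x ∈ A i → x ∈ A ((i + 1) % n) := by
      intro i hi hx
      rcases hall i hi with ⟨h, _⟩ | h
      · exact h
      · exact absurd hx h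
    have key : ∀ k, x ∈ A ((j + k) % n) := by
      intro k
      induction k with
      | zero => simpa [Nat.mod_eq_of_lt hj] using hxj
      | succ k ih =>
        have h1 : (j + k) % n < n := Nat.mod_lt _ hnpos
        have := step _ h1 ih
        have heq : ((j + k) % n + 1) % n = (j + (k + 1)) % n := by
          rw [show j + (k + 1) = (j + k) + 1 by ring, Nat.add_mod (j+k) 1, Nat.one_mod_eq_one.mpr (by omega)]
        rwa [heq] at this
    intro i hi
    have := key (n - j + i)
    have heq : (j + (n - j + i)) % n = i := by
      have : j + (n - j + i) = n + i := by omega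
      rw [this, Nat.add_mod_left, Nat.mod_eq_of_lt hi]
    rwa [heq] at this
  · intro h
    refine ⟨fun i hi => Or.inl ⟨h _ (Nat.mod_lt _ hnpos), h i hi⟩, 0, hnpos, h 0 hnpos⟩
end

section
/- Let n ≥ 2, let P be a probability measure, and let A₁, …, Aₙ be measurable events with P(Aᵢ) > 0 for all i. If P(A_{i+1}|Aᵢ) = 1 for i = 1,…,n−1 and P(A₁|Aₙ) = 1, then P(Aᵢ|Aⱼ) = 1 for all i, j ∈ {1,…,n} (probabilistic Loop rule). -/
open MeasureTheory Set

lemma condP_eq_one_iff {Ω : Type*} [MeasurableSpace Ω] (μ : Measure Ω) [IsProbabilityMeasure μ]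
    {E H : Set Ω} (hE : MeasurableSet E) (hH : 0 < μ H) :
    condP μ E H = 1 ↔ μ (H \ E) = 0 := by
  have hHfin : μ H ≠ ⊤ := measure_ne_top μ H
  have hIfin : μ (H ∩ E) ≠ ⊤ := measure_ne_top μ _
  have hdec : μ (H ∩ E) + μ (H \ E) = μ H := measure_inter_add_diff H hE
  have hEH : E ∩ H = H ∩ E := inter_comm _ _
  have hne : (μ H).toReal ≠ 0 := by
    simp [ENNReal.toReal_ne_zero, hH.ne', hHfin]
  constructor
  · intro h
    unfold condP at h
    have h1 : (μ (E ∩ H)).toReal = (μ H).toReal := by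
      field_simp at h; linarith
    have h2 : μ (E ∩ H) = μ H :=
      (ENNReal.toReal_eq_toReal_iff' (measure_ne_top μ _) hHfin).mp h1
    rw [hEH] at h2
    have h3 : μ (H ∩ E) + μ (H \ E) = μ (H ∩ E) + 0 := by
      rw [add_zero, hdec, h2]
    exact (ENNReal.add_right_inj hIfin).mp h3
  · intro h
    have h2 : μ (E ∩ H) = μ H := by
      rw [hEH, ← hdec, h, add_zero]
    unfold condP
    rw [h2]
    exact div_self hne

theorem probabilistic_loop_rule {Ω : Type*} [MeasurableSpace Ω]
    (μ : Measure Ω) [IsProbabilityMeasure μ] (n : ℕ) (hn : 2 ≤ n) (A : ℕ → Set Ω)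
    (hA : ∀ i < n, MeasurableSet (A i)) (hpos : ∀ i < n, 0 < μ (A i))
    (hstep : ∀ i, i + 1 < n → condP μ (A (i + 1)) (A i) = 1)
    (hloop : condP μ (A 0) (A (n - 1)) = 1) :
    ∀ i < n, ∀ j < n, condP μ (A i) (A j) = 1 := by
  have hnpos : 0 < n := by omega
  -- each step set is null
  have hstep' : ∀ k < n, μ (A k \ A ((k + 1) % n)) = 0 := by
    intro k hk
    rcases lt_or_ge (k + 1) n with h | h
    · have : (k + 1) % n = k + 1 := Nat.mod_eq_of_lt h
      rw [this]
      exact (condP_eq_one_iff μ (hA _ h) (hpos k hk)).mp (hstep k h)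
    · have hk' : k = n - 1 := by omega
      have : (k + 1) % n = 0 := by
        have : k + 1 = n := by omega
        simp [this]
      rw [this, hk']
      exact (condP_eq_one_iff μ (hA 0 (by omega)) (hpos _ (by omega))).mp hloop
  set N : Set Ω := ⋃ k : Fin n, (A k \ A ((k + 1) % n)) with hNdef
  have hNnull : μ N = 0 := measure_iUnion_null fun k => hstep' k k.2
  -- propagation around the cycle
  have hprop : ∀ x, x ∉ N → ∀ i < n, x ∈ A i → ∀ t, x ∈ A ((i + t) % n) := by
    intro x hx i hi hxi t
    induction t with
    | zero => simpa [Nat.mod_eq_of_lt hi] using hxi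
    | succ t ih =>
      set m := (i + t) % n with hm
      have hmlt : m < n := Nat.mod_lt _ hnpos
      have hnot : x ∉ A m \ A ((m + 1) % n) := by
        intro hmem
        exact hx (mem_iUnion.mpr ⟨⟨m, hmlt⟩, hmem⟩)
      have hxm1 : x ∈ A ((m + 1) % n) := by
        by_contra hcon
        exact hnot ⟨ih, hcon⟩
      have : (i + (t + 1)) % n = (m + 1) % n := by
        rw [hm, ← Nat.add_assoc, Nat.add_mod (i + t) 1 n, Nat.mod_eq_of_lt (show 1 < n by omega)]
      rwa [this]
  -- diff of any two is in N
  have hdiff : ∀ i < n, ∀ j < n, μ (A j \ A i) = 0 := by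
    intro i hi j hj
    have hsub : A j \ A i ⊆ N := by
      intro x ⟨hxj, hxi⟩
      by_contra hxN
      have := hprop x hxN j hj hxj (n - j + i)
      have heq : (j + (n - j + i)) % n = i := by
        have : j + (n - j + i) = n + i := by omega
        rw [this, Nat.add_mod_left, Nat.mod_eq_of_lt hi]
      rw [heq] at this
      exact hxi this
    exact measure_mono_null hsub hNnull
  intro i hi j hj
  exact (condP_eq_one_iff μ (hA i hi) (hpos j hj)).mpr (hdiff i hi j hj)
end
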